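/- Let ℐ be the family of independent sets of a symplectic matroid (E_{±n}, ℬ), and let I and J be members of ℐ such that |I| < |J| and such that for all y ∈ J∖I the set {y} ∪ I is not in ℐ. Then I ∪ J is inadmissible, i.e., there exists z ∈ I ∪ J with −z ∈ I ∪ J. -/

import Mathlib

/-- The ground set `E_{±n} = {±1, ±2, …, ±n}` as a finite set of integers. -/
noncomputable def SympE (n : ℕ) : Finset ℤ := (Finset.Icc (-(n : ℤ)) (n : ℤ)).erase 0

/-- `negSet S = {-s : s ∈ S}`. -/
def negSet (S : Finset ℤ) : Finset ℤ := S.image (fun x => -x)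

/-- A set `S` is admissible if `S ∩ (-S) = ∅`. -/
def IsAdmissibleSet (S : Finset ℤ) : Prop := ∀ s ∈ S, -s ∉ S

/-- An admissible permutation of `E_{±n}`: a permutation of `ℤ` mapping `E_{±n}` to
itself and commuting with negation.  It induces the admissible total ordering
`x ≺ y ↔ w x < w y` on `E_{±n}`. -/
def IsAdmissiblePerm (n : ℕ) (w : Equiv.Perm ℤ) : Prop :=
  (∀ x ∈ SympE n, w x ∈ SympE n) ∧ ∀ x : ℤ, w (-x) = -(w x)

/-- A weight function `ω` compatible with the admissible ordering induced by `w`: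
`i ≺ j` implies `ω i ≤ ω j`. -/
def IsCompatibleWeight (n : ℕ) (w : Equiv.Perm ℤ) (ω : ℤ → ℝ) : Prop :=
  ∀ i ∈ SympE n, ∀ j ∈ SympE n, w i < w j → ω i ≤ ω j

/-- The elements of `E_{±n}` listed from largest to smallest with respect to the
admissible ordering induced by `w`. -/
noncomputable def orderList (n : ℕ) (w : Equiv.Perm ℤ) : List ℤ :=
  (((SympE n).sort (· ≤ ·)).reverse).map w.symm

/-- The greedy algorithm: processing the elements of the list in order, starting
with the current set `B`, pick up an element iff adding it keeps the current set
a subset of some member of `ℬ`.  Returns the list of picked-up elements in order. -/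
def greedyAux (ℬ : Finset (Finset ℤ)) : List ℤ → Finset ℤ → List ℤ
  | [], _ => []
  | a :: l, B =>
      if ∃ B' ∈ ℬ, insert a B ⊆ B' then a :: greedyAux ℬ l (insert a B)
      else greedyAux ℬ l B

/-- The list of elements picked up by the greedy algorithm on `ℬ`, in decreasing
order with respect to the admissible ordering induced by `w`. -/
noncomputable def greedyPicks (n : ℕ) (ℬ : Finset (Finset ℤ)) (w : Equiv.Perm ℤ) : List ℤ :=
  greedyAux ℬ (orderList n w) ∅

/-- The greedy solution of `ℬ` with respect to the admissible ordering induced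
by `w`. -/
noncomputable def greedySol (n : ℕ) (ℬ : Finset (Finset ℤ)) (w : Equiv.Perm ℤ) : Finset ℤ :=
  (greedyPicks n ℬ w).toFinset

/-- `(E_{±n}, ℬ)` is a symplectic matroid: `ℬ` is a nonempty family of
equinumerous admissible subsets of `E_{±n}` such that for every admissible
ordering and every compatible weight function the greedy solution is optimal. -/
def IsSymplecticMatroid (n : ℕ) (ℬ : Finset (Finset ℤ)) : Prop :=
  ℬ.Nonempty ∧
  (∀ B ∈ ℬ, B ⊆ SympE n ∧ IsAdmissibleSet B) ∧
  (∀ B ∈ ℬ, ∀ B' ∈ ℬ, B.card = B'.card) ∧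
  (∀ w : Equiv.Perm ℤ, IsAdmissiblePerm n w →
    ∀ ω : ℤ → ℝ, IsCompatibleWeight n w ω →
      ∀ B' ∈ ℬ, ∑ b ∈ B', ω b ≤ ∑ b ∈ greedySol n ℬ w, ω b)

/-- The family of independent sets of `(E_{±n}, ℬ)`:
all subsets of `E_{±n}` contained in some member of `ℬ`. -/
noncomputable def indepSets (n : ℕ) (ℬ : Finset (Finset ℤ)) : Finset (Finset ℤ) :=
  (SympE n).powerset.filter (fun I => ∃ B ∈ ℬ, I ⊆ B)

/-- The collection of maximal (with respect to inclusion) members of `ℐ`. -/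
def maximalMembers (ℐ : Finset (Finset ℤ)) : Finset (Finset ℤ) :=
  ℐ.filter (fun B => ∀ I ∈ ℐ, B ⊆ I → I = B)

/-- The independent-set exchange property for symplectic matroids. -/
def ExchangeProp (ℐ : Finset (Finset ℤ)) : Prop :=
  ∀ I ∈ ℐ, ∀ J ∈ ℐ, I.card < J.card →
    (∀ y ∈ J \ I, insert y I ∉ ℐ) →
      ¬ IsAdmissibleSet (I ∪ J) ∧
        ∃ x, x ∉ I ∧ insert x I ∈ ℐ ∧ insert (-x) (I \ negSet J) ∈ ℐ

/-!
Suppose `I ∪ J` were admissible. Then some admissible ordering lists the elements of `I` first,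
then those of `J \ I`, then the rest of `E_{±n}`: it is built by composing signed
transpositions `(b t)(-b -t)`. The weight that is `1` on `I ∪ J` and `0` elsewhere is compatible
with it. The greedy algorithm accepts all of `I` and then rejects every `y ∈ J \ I` (as
`{y} ∪ I ∉ ℐ`), so its solution has weight `|I|`, while a basis containing `J` has weight at
least `|J| > |I|`, contradicting optimality of the greedy solution.
-/

open Equiv

lemma mem_SympE {n : ℕ} {x : ℤ} : x ∈ SympE n ↔ x ≠ 0 ∧ -(n : ℤ) ≤ x ∧ x ≤ n := by
  simp only [SympE, Finset.mem_erase, Finset.mem_Icc]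

lemma mem_indepSets {n : ℕ} {ℬ : Finset (Finset ℤ)} {I : Finset ℤ} :
    I ∈ indepSets n ℬ ↔ I ⊆ SympE n ∧ ∃ B ∈ ℬ, I ⊆ B := by
  simp only [indepSets, Finset.mem_filter, Finset.mem_powerset]

namespace IsAdmissiblePerm

variable {n : ℕ} {v w : Perm ℤ}

lemma one : IsAdmissiblePerm n 1 :=
  ⟨fun _ hx => hx, fun _ => rfl⟩

lemma mul (hv : IsAdmissiblePerm n v) (hw : IsAdmissiblePerm n w) :
    IsAdmissiblePerm n (v * w) :=
  ⟨fun x hx => hv.1 _ (hw.1 x hx), fun x => by simp only [Perm.mul_apply, hw.2, hv.2]⟩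

lemma image_SympE (hw : IsAdmissiblePerm n w) : (SympE n).image w = SympE n :=
  Finset.eq_of_subset_of_card_le (Finset.image_subset_iff.2 hw.1)
    (Finset.card_image_of_injective _ w.injective).ge

lemma symm_mem_SympE (hw : IsAdmissiblePerm n w) {y : ℤ} (hy : y ∈ SympE n) :
    w.symm y ∈ SympE n := by
  rw [← hw.image_SympE] at hy
  obtain ⟨x, hx, rfl⟩ := Finset.mem_image.1 hy
  simpa using hx

end IsAdmissiblePerm

/-- For `b = -t` the two transpositions would cancel, so a single one is used. -/
def signedSwap (b t : ℤ) : Perm ℤ :=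
  if b = -t then swap b t else swap b t * swap (-b) (-t)

lemma signedSwap_apply_left {b t : ℤ} (hb : b ≠ 0) : signedSwap b t b = t := by
  unfold signedSwap
  split_ifs with h
  · exact swap_apply_left b t
  · rw [Perm.mul_apply, swap_apply_of_ne_of_ne (a := -b) (b := -t) (by omega) (by omega),
      swap_apply_left]

lemma signedSwap_apply_of_ne {b t x : ℤ} (hb : x ≠ b) (hb' : x ≠ -b) (ht : x ≠ t)
    (ht' : x ≠ -t) : signedSwap b t x = x := by
  unfold signedSwap
  split_ifs
  · exact swap_apply_of_ne_of_ne hb ht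
  · rw [Perm.mul_apply, swap_apply_of_ne_of_ne hb' ht', swap_apply_of_ne_of_ne hb ht]

lemma isAdmissiblePerm_signedSwap {n : ℕ} {b t : ℤ} (hb : b ∈ SympE n) (ht : t ∈ SympE n) :
    IsAdmissiblePerm n (signedSwap b t) := by
  rw [mem_SympE] at hb ht
  unfold signedSwap
  constructor
  · intro x hx
    rw [mem_SympE] at hx ⊢
    split_ifs <;> simp only [Perm.mul_apply, swap_apply_def] <;> split_ifs <;> omega
  · intro x
    split_ifs <;> simp only [Perm.mul_apply, swap_apply_def] <;> split_ifs <;> omega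

lemma exists_isAdmissiblePerm_apply_getElem {n : ℕ} {L : List ℤ} (hL : ∀ x ∈ L, x ∈ SympE n)
    (habs : L.Pairwise (fun a b => |a| ≠ |b|)) {t : ℤ} (ht : t ≤ n) (hlen : L.length ≤ t) :
    ∃ w, IsAdmissiblePerm n w ∧ ∀ (i : ℕ) (hi : i < L.length), w L[i] = t - i := by
  induction L generalizing t with
  | nil => exact ⟨1, .one, fun i hi => absurd hi (Nat.not_lt_zero i)⟩
  | cons a L ih =>
    rw [List.forall_mem_cons] at hL
    rw [List.pairwise_cons] at habs
    rw [List.length_cons, Nat.cast_succ] at hlen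
    obtain ⟨v, hv, hvL⟩ := ih hL.2 habs.2 (t := t - 1) (by omega) (by omega)
    have hva := hv.1 a hL.1
    have htS : t ∈ SympE n := mem_SympE.2 ⟨by omega, by omega, ht⟩
    refine ⟨signedSwap (v a) t * v, (isAdmissiblePerm_signedSwap hva htS).mul hv, ?_⟩
    rintro (_ | i) hi
    · simpa using signedSwap_apply_left (mem_SympE.1 hva).1
    · have hi' : i < L.length := Nat.lt_of_succ_lt_succ hi
      have hne : L[i] ≠ a ∧ L[i] ≠ -a := by
        have := habs.1 L[i] (List.getElem_mem _)
        constructor <;> intro h <;> simp [h] at this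
      rw [List.getElem_cons_succ, Perm.mul_apply, hvL i hi', signedSwap_apply_of_ne]
      · push_cast; ring
      · rw [← hvL i hi']; exact v.injective.ne hne.1
      · rw [← hvL i hi', ← hv.2]; exact v.injective.ne hne.2
      all_goals omega

lemma length_le_of_pairwise_abs_ne {n : ℕ} {L : List ℤ} (hL : ∀ x ∈ L, x ∈ SympE n)
    (habs : L.Pairwise (fun a b => |a| ≠ |b|)) : L.length ≤ n := by
  have hsub : (L.map abs).toFinset ⊆ Finset.Icc 1 (n : ℤ) := by
    intro v hv
    obtain ⟨x, hx, rfl⟩ := List.mem_map.1 (List.mem_toFinset.1 hv)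
    have := mem_SympE.1 (hL x hx)
    rw [Finset.mem_Icc]
    constructor <;> cases abs_cases x <;> omega
  calc L.length = (L.map abs).toFinset.card := by
        rw [List.toFinset_card_of_nodup (List.pairwise_map.2 habs), List.length_map]
    _ ≤ (Finset.Icc 1 (n : ℤ)).card := Finset.card_le_card hsub
    _ = n := by simp

lemma exists_isAdmissiblePerm_prefix {n : ℕ} {L : List ℤ} (hL : ∀ x ∈ L, x ∈ SympE n)
    (habs : L.Pairwise (fun a b => |a| ≠ |b|)) :
    ∃ w, IsAdmissiblePerm n w ∧ L.Pairwise (fun a b => w b < w a) ∧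
      ∀ x ∈ L, ∀ y ∈ SympE n, y ∉ L → w y < w x := by
  obtain ⟨w, hw, hwL⟩ := exists_isAdmissiblePerm_apply_getElem hL habs le_rfl
    (by exact_mod_cast length_le_of_pairwise_abs_ne hL habs)
  refine ⟨w, hw, List.pairwise_iff_getElem.2 fun i j hi hj hij => ?_, ?_⟩
  · rw [hwL, hwL]; omega
  · intro x hx y hy hyL
    obtain ⟨i, hi, rfl⟩ := List.getElem_of_mem hx
    rw [hwL]
    by_contra! hle
    have hwy := (mem_SympE.1 (hw.1 y hy)).2.2
    obtain ⟨j, hj⟩ : ∃ j : ℕ, (j : ℤ) = n - w y := ⟨(n - w y).toNat, by omega⟩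
    have hjL : j < L.length := by omega
    have hwj : w L[j] = w y := by rw [hwL]; omega
    exact hyL (w.injective hwj ▸ List.getElem_mem hjL)

lemma List.eq_append_filter_of_pairwise {α β : Type*} [DecidableEq α] [LinearOrder β]
    {f : α → β} {l L : List α} (hl : l.Pairwise (fun a b => f b < f a))
    (hL : L.Pairwise (fun a b => f b < f a)) (hsub : L ⊆ l)
    (htop : ∀ x ∈ L, ∀ y ∈ l, y ∉ L → f y < f x) :
    l = L ++ l.filter (· ∉ L) := by
  have : Std.Irrefl (fun a b => f b < f a) := ⟨fun a => lt_irrefl (f a)⟩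
  have : Std.Antisymm (fun a b => f b < f a) := ⟨fun a b h h' => absurd h (lt_asymm h')⟩
  refine hl.eq_of_mem_iff ?_ fun a => ?_
  · refine List.pairwise_append.2 ⟨hL, hl.filter _, fun x hx y hy => ?_⟩
    rw [List.mem_filter, decide_eq_true_iff] at hy
    exact htop x hx y hy.1 hy.2
  · rw [List.mem_append, List.mem_filter, decide_eq_true_iff]
    by_cases ha : a ∈ L
    · simp [ha, hsub ha]
    · simp [ha]

section Greedy

variable {n : ℕ} {w : Perm ℤ} (ℬ : Finset (Finset ℤ))

lemma mem_orderList (hw : IsAdmissiblePerm n w) {x : ℤ} : x ∈ orderList n w ↔ x ∈ SympE n := by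
  simp only [orderList, List.mem_map, List.mem_reverse, Finset.mem_sort]
  exact ⟨fun ⟨y, hy, hyx⟩ => hyx ▸ hw.symm_mem_SympE hy,
    fun hx => ⟨w x, hw.1 x hx, w.symm_apply_apply x⟩⟩

lemma pairwise_orderList : (orderList n w).Pairwise (fun a b => w b < w a) := by
  simpa [orderList, List.pairwise_map, List.pairwise_reverse] using
    (Finset.sortedLT_sort (SympE n)).pairwise

lemma greedyAux_sublist (l : List ℤ) (B : Finset ℤ) : (greedyAux ℬ l B).Sublist l := by
  induction l generalizing B with
  | nil => exact List.Sublist.slnil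
  | cons a l ih =>
    rw [greedyAux]
    split_ifs
    · exact (ih _).cons_cons a
    · exact (ih _).cons a

lemma greedyAux_append_of_subset {l₁ : List ℤ} (l₂ : List ℤ) {B : Finset ℤ}
    (h : ∃ B' ∈ ℬ, B ∪ l₁.toFinset ⊆ B') :
    greedyAux ℬ (l₁ ++ l₂) B = l₁ ++ greedyAux ℬ l₂ (B ∪ l₁.toFinset) := by
  induction l₁ generalizing B with
  | nil => simp
  | cons a l₁ ih =>
    have hB : insert a B ∪ l₁.toFinset = B ∪ (a :: l₁).toFinset := by
      rw [List.toFinset_cons, Finset.union_insert, Finset.insert_union]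
    obtain ⟨B', hB', hsub⟩ := h
    have ha : ∃ B'' ∈ ℬ, insert a B ⊆ B'' :=
      ⟨B', hB', (Finset.subset_union_left.trans hB.le).trans hsub⟩
    rw [List.cons_append, greedyAux, if_pos ha, ih (hB ▸ ⟨B', hB', hsub⟩), hB, List.cons_append]

lemma greedyAux_append_of_forall_not {l₁ : List ℤ} (l₂ : List ℤ) {B : Finset ℤ}
    (h : ∀ a ∈ l₁, ¬ ∃ B' ∈ ℬ, insert a B ⊆ B') :
    greedyAux ℬ (l₁ ++ l₂) B = greedyAux ℬ l₂ B := by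
  induction l₁ with
  | nil => rfl
  | cons a l₁ ih =>
    rw [List.forall_mem_cons] at h
    rw [List.cons_append, greedyAux, if_neg h.1, ih h.2]

lemma greedyAux_sort_append_sort_append {I J : Finset ℤ} (hI : ∃ B ∈ ℬ, I ⊆ B)
    (hy : ∀ y ∈ J \ I, ¬ ∃ B ∈ ℬ, insert y I ⊆ B) (rest : List ℤ) :
    greedyAux ℬ (I.sort ++ (J \ I).sort ++ rest) ∅ = I.sort ++ greedyAux ℬ rest I := by
  rw [List.append_assoc, greedyAux_append_of_subset ℬ _ (by simpa using hI),
    Finset.sort_toFinset, Finset.empty_union,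
    greedyAux_append_of_forall_not ℬ _ fun y hy' => hy y ((Finset.mem_sort _).1 hy')]

lemma filter_greedySol_eq {I J : Finset ℤ} (hI : ∃ B ∈ ℬ, I ⊆ B)
    (hy : ∀ y ∈ J \ I, ¬ ∃ B ∈ ℬ, insert y I ⊆ B) {rest : List ℤ}
    (horder : orderList n w = I.sort ++ (J \ I).sort ++ rest) (hrest : ∀ x ∈ rest, x ∉ I ∪ J) :
    (greedySol n ℬ w).filter (· ∈ I ∪ J) = I := by
  ext x
  simp only [greedySol, greedyPicks, horder, greedyAux_sort_append_sort_append ℬ hI hy,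
    Finset.mem_filter, List.mem_toFinset, List.mem_append, Finset.mem_sort]
  constructor
  · rintro ⟨hx | hx, hxU⟩
    exacts [hx, absurd hxU (hrest x ((greedyAux_sublist ℬ _ _).subset hx))]
  · exact fun hx => ⟨Or.inl hx, Finset.mem_union_left _ hx⟩

end Greedy

lemma mem_sort_append_sort_sdiff {I J : Finset ℤ} {x : ℤ} :
    x ∈ I.sort ++ (J \ I).sort ↔ x ∈ I ∪ J := by
  simp only [List.mem_append, Finset.mem_sort, Finset.mem_sdiff, Finset.mem_union]
  tauto

lemma pairwise_abs_ne_sort_append_sort {I J : Finset ℤ} (h : IsAdmissibleSet (I ∪ J)) :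
    (I.sort ++ (J \ I).sort).Pairwise (fun a b => |a| ≠ |b|) := by
  have hnodup : (I.sort ++ (J \ I).sort).Nodup :=
    List.nodup_append.2 ⟨Finset.sort_nodup _ _, Finset.sort_nodup _ _, fun a ha b hb hab =>
      (Finset.mem_sdiff.1 ((Finset.mem_sort _).1 hb)).2 (hab ▸ (Finset.mem_sort _).1 ha)⟩
  refine hnodup.imp_of_mem fun ha hb hab hab' => (abs_eq_abs.1 hab').elim hab fun hneg => ?_
  rw [mem_sort_append_sort_sdiff] at ha hb
  exact h _ ha (by rwa [hneg, neg_neg])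

lemma isCompatibleWeight_boole {n : ℕ} {w : Perm ℤ} {p : ℤ → Prop} [DecidablePred p]
    (h : ∀ x ∈ SympE n, ∀ y ∈ SympE n, p x → ¬ p y → w y < w x) :
    IsCompatibleWeight n w (fun x => if p x then 1 else 0) := by
  intro i hi j hj hij
  by_cases hpi : p i
  · have hpj : p j := by_contra fun hpj => (h i hi j hj hpi hpj).not_gt hij
    simp [hpi, hpj]
  · simp only [hpi, if_false]
    split_ifs <;> norm_num

theorem symplectic_matroid_union_inadmissible_general (n : ℕ)
    (ℬ : Finset (Finset ℤ)) (hB : IsSymplecticMatroid n ℬ)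
    (I J : Finset ℤ)
    (hI : I ∈ indepSets n ℬ) (hJ : J ∈ indepSets n ℬ)
    (hcard : I.card < J.card)
    (hy : ∀ y ∈ J \ I, insert y I ∉ indepSets n ℬ) :
    ∃ z ∈ I ∪ J, -z ∈ I ∪ J := by
  by_contra! hadm
  rw [mem_indepSets] at hI hJ
  set L := I.sort ++ (J \ I).sort
  have hLS : ∀ x ∈ L, x ∈ SympE n := fun x hx =>
    Finset.union_subset hI.1 hJ.1 (mem_sort_append_sort_sdiff.1 hx)
  obtain ⟨w, hw, hLw, htop⟩ :=
    exists_isAdmissiblePerm_prefix hLS (pairwise_abs_ne_sort_append_sort hadm)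
  have horder : orderList n w = L ++ (orderList n w).filter (· ∉ L) :=
    List.eq_append_filter_of_pairwise pairwise_orderList hLw
      (fun x hx => (mem_orderList hw).2 (hLS x hx))
      (fun x hx y hyO => htop x hx y ((mem_orderList hw).1 hyO))
  have hy' : ∀ y ∈ J \ I, ¬ ∃ B ∈ ℬ, insert y I ⊆ B := fun y hyJ hex =>
    hy y hyJ (mem_indepSets.2 ⟨Finset.insert_subset (hJ.1 (Finset.mem_sdiff.1 hyJ).1) hI.1, hex⟩)
  have hsol : (greedySol n ℬ w).filter (· ∈ I ∪ J) = I := filter_greedySol_eq ℬ hI.2 hy' horder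
    fun x hx => mt mem_sort_append_sort_sdiff.2 (of_decide_eq_true (List.mem_filter.1 hx).2)
  obtain ⟨BJ, hBJ, hJBJ⟩ := hJ.2
  have key := hB.2.2.2 w hw (fun x => if x ∈ I ∪ J then 1 else 0)
    (isCompatibleWeight_boole fun x _ y hyS hx hyU =>
      htop x (mem_sort_append_sort_sdiff.2 hx) y hyS (mt mem_sort_append_sort_sdiff.1 hyU))
    BJ hBJ
  simp only [Finset.sum_boole, hsol] at key
  have hJI : (BJ.filter (· ∈ I ∪ J)).card ≤ I.card := by exact_mod_cast key
  refine (hcard.trans_le (Finset.card_le_card fun x hx => ?_)).not_ge hJI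
  exact Finset.mem_filter.2 ⟨hJBJ hx, Finset.mem_union_right _ hx⟩

/-- If `ℐ` is the family of independent sets of a symplectic matroid
`(E_{±n}, ℬ)`, and `I, J ∈ ℐ` with `|I| < |J|` and `{y} ∪ I ∉ ℐ` for all
`y ∈ J \ I`, then `I ∪ J` is inadmissible, i.e., there exists `z ∈ I ∪ J` with
`-z ∈ I ∪ J`. -/
theorem symplectic_matroid_union_inadmissible (n : ℕ) (hn : 0 < n)
    (ℬ : Finset (Finset ℤ)) (hB : IsSymplecticMatroid n ℬ)
    (I J : Finset ℤ)
    (hI : I ∈ indepSets n ℬ) (hJ : J ∈ indepSets n ℬ)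
    (hcard : I.card < J.card)
    (hy : ∀ y ∈ J \ I, insert y I ∉ indepSets n ℬ) :
    ∃ z ∈ I ∪ J, -z ∈ I ∪ J :=
  symplectic_matroid_union_inadmissible_general n ℬ hB I J hI hJ hcard hy
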